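/- There exists a constant C > 0 such that for every real r ≥ 0 and all φ ∈ H³(T) ∩ H^{r+1}(T) with zero spatial mean, the quadratic term Q[φ] := -3[H; φ_x']φ''_x - [H; φ']φ'''_x, with φ' := H[φ], satisfies ‖Q[φ]‖_{H^r(T)} ≤ C ‖φ_x‖_{H²(T)} ‖φ_x‖_{H^r(T)}; note C is independent of r. -/

import Mathlib

/-!
On the Fourier side `Q[φ]^(k) = Σ_ℓ Λ̃(k - ℓ, ℓ) φ^(k - ℓ) φ^(ℓ)` with an integer kernel
carrying the factor `sgn k - sgn ℓ`. It vanishes unless `k` and `ℓ` have opposite signs, and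
then `|k|, |ℓ| ≤ |k - ℓ|`; hence `|Λ̃| ≤ 8 |k - ℓ| ℓ²` and `⟨k⟩^r ≤ ⟨k - ℓ⟩^r`: no third
derivative survives, and all `r` derivatives fall on the high-frequency factor. So
`⟨k⟩^r |Q^(k)| ≤ 8 (A ⋆ B)(k)` with `A = ⟨·⟩^r |(φₓ)^|` and `B = |(φₓₓ)^|`, and Young's
inequality `‖A ⋆ B‖_{ℓ²} ≤ ‖A‖_{ℓ²} ‖B‖_{ℓ¹}` together with Cauchy–Schwarz
`‖B‖_{ℓ¹} ≤ K ‖φₓ‖_{H²}` concludes, with constants independent of `r`.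
-/

open scoped Real

noncomputable section

/-- The Japanese-bracket power `⟨k⟩ˢ = (1 + |k|²)^{s/2}`. -/
def japow (k : ℤ) (s : ℝ) : ℝ := (1 + (k : ℝ) ^ 2) ^ (s / 2)

/-- The squared `Hˢ(𝕋)` norm of a periodic function described by its sequence of
Fourier coefficients `c`: `‖f‖²_{Hˢ} = 2π·Σ_k ⟨k⟩^{2s}|f^(k)|²`. -/
def hsNormSq (s : ℝ) (c : ℤ → ℂ) : ℝ := 2 * Real.pi * ∑' k : ℤ, japow k (2 * s) * ‖c k‖ ^ 2

/-- The `Hˢ(𝕋)` norm in terms of Fourier coefficients. -/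
def hsNorm (s : ℝ) (c : ℤ → ℂ) : ℝ := Real.sqrt (hsNormSq s c)

/-- Membership in the Sobolev space `Hˢ(𝕋)`, in terms of Fourier coefficients. -/
def MemHs (s : ℝ) (c : ℤ → ℂ) : Prop := Summable fun k : ℤ => japow k (2 * s) * ‖c k‖ ^ 2

/-- The discrete Hilbert transform on the Fourier side: `(H[f])^(k) = -i·sgn(k)·f^(k)`. -/
def hilbC (c : ℤ → ℂ) : ℤ → ℂ := fun k => -Complex.I * (Int.sign k : ℤ) * c k

/-- The `x`-derivative on the Fourier side: `(∂ₓf)^(k) = i·k·f^(k)`. -/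
def derC (c : ℤ → ℂ) : ℤ → ℂ := fun k => Complex.I * (k : ℂ) * c k

/-- The pointwise product of two periodic functions on the Fourier side
(discrete convolution of the coefficients). -/
def convC (a b : ℤ → ℂ) : ℤ → ℂ := fun k => ∑' ℓ : ℤ, a (k - ℓ) * b ℓ

/-- The commutator `[H; v]f = H[v·f] - v·H[f]` on the Fourier side. -/
def commH (v f : ℤ → ℂ) : ℤ → ℂ := fun k => hilbC (convC v f) k - convC v (hilbC f) k

/-- The quadratic term `Q[φ] = -3[H; φ'ₓ]φ'ₓₓ - [H; φ']φ'ₓₓₓ` (with `φ' = H[φ]`) of the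
amplitude equation, on the Fourier side. -/
def quadQ (c : ℤ → ℂ) : ℤ → ℂ :=
  fun k =>
    -3 * commH (derC (hilbC c)) (derC (derC (hilbC c))) k -
      commH (hilbC c) (derC (derC (derC (hilbC c)))) k

theorem summable_and_tsum_mul_le_sqrt_mul_sqrt {ι : Type*} {f g : ι → ℝ} (hf : ∀ i, 0 ≤ f i)
    (hg : ∀ i, 0 ≤ g i) (hf2 : Summable fun i => f i ^ 2) (hg2 : Summable fun i => g i ^ 2) :
    (Summable fun i => f i * g i) ∧ ∑' i, f i * g i ≤ √(∑' i, f i ^ 2) * √(∑' i, g i ^ 2) := by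
  simp only [← Real.rpow_two] at hf2 hg2
  simpa only [Real.sqrt_eq_rpow, ← Real.rpow_two] using
    Real.summable_and_inner_le_Lp_mul_Lq_tsum_of_nonneg .two_two hf hg hf2 hg2

theorem summable_mul_comp_sub {a b : ℤ → ℝ} (ha0 : ∀ m, 0 ≤ a m) (hb0 : ∀ m, 0 ≤ b m)
    (ha : Summable fun m => a m ^ 2) (hb : Summable fun m => b m ^ 2) (k : ℤ) :
    Summable fun l => a (k - l) * b l :=
  (summable_and_tsum_mul_le_sqrt_mul_sqrt (fun l => ha0 (k - l)) hb0
    ((Equiv.subLeft k).summable_iff.mpr ha) hb).1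

section Young

variable {A B : ℤ → ℝ}

theorem summable_uncurry_mul_sq_comp_sub (hA2 : Summable fun m => A m ^ 2) (hB0 : ∀ l, 0 ≤ B l)
    (hB : Summable B) :
    Summable (Function.uncurry fun l k => B l * A (k - l) ^ 2) := by
  have hshift (l : ℤ) : Summable fun k => A (k - l) ^ 2 :=
    (Equiv.subRight l).summable_iff.mpr hA2
  refine (summable_prod_of_nonneg fun p => mul_nonneg (hB0 _) (sq_nonneg _)).mpr
    ⟨fun l => (hshift l).mul_left (B l), ?_⟩
  refine (hB.mul_right (∑' m, A m ^ 2)).congr fun l => ?_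
  dsimp only
  rw [tsum_mul_left]
  exact congrArg (B l * ·) ((Equiv.subRight l).tsum_eq fun m => A m ^ 2).symm

theorem sq_tsum_conv_le (hA0 : ∀ m, 0 ≤ A m) (hB0 : ∀ l, 0 ≤ B l) (hB : Summable B)
    (k : ℤ) (hAB : Summable fun l => A (k - l) ^ 2 * B l) :
    (Summable fun l => A (k - l) * B l) ∧
      (∑' l, A (k - l) * B l) ^ 2 ≤ (∑' l, B l) * ∑' l, A (k - l) ^ 2 * B l := by
  have key := summable_and_tsum_mul_le_sqrt_mul_sqrt (f := fun l => A (k - l) * √(B l))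
    (g := fun l => √(B l)) (fun l => by positivity [hA0 (k - l)]) (fun l => Real.sqrt_nonneg _)
    (by simpa only [mul_pow, Real.sq_sqrt (hB0 _)] using hAB)
    (by simpa only [Real.sq_sqrt (hB0 _)] using hB)
  simp only [mul_assoc, Real.mul_self_sqrt (hB0 _), mul_pow, Real.sq_sqrt (hB0 _)] at key
  refine ⟨key.1, ?_⟩
  calc (∑' l, A (k - l) * B l) ^ 2
      ≤ (√(∑' l, A (k - l) ^ 2 * B l) * √(∑' l, B l)) ^ 2 :=
        pow_le_pow_left₀ (tsum_nonneg fun l => mul_nonneg (hA0 _) (hB0 _)) key.2 2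
    _ = (∑' l, B l) * ∑' l, A (k - l) ^ 2 * B l := by
        rw [mul_pow, Real.sq_sqrt (tsum_nonneg fun l => mul_nonneg (sq_nonneg _) (hB0 _)),
          Real.sq_sqrt (tsum_nonneg hB0), mul_comm]

theorem summable_and_tsum_sq_conv_le (hA0 : ∀ m, 0 ≤ A m) (hB0 : ∀ l, 0 ≤ B l)
    (hA2 : Summable fun m => A m ^ 2) (hB : Summable B) :
    (∀ k, Summable fun l => A (k - l) * B l) ∧
      (Summable fun k => (∑' l, A (k - l) * B l) ^ 2) ∧
      ∑' k, (∑' l, A (k - l) * B l) ^ 2 ≤ (∑' m, A m ^ 2) * (∑' l, B l) ^ 2 := by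
  have h := summable_uncurry_mul_sq_comp_sub hA2 hB0 hB
  have hrow (k : ℤ) : Summable fun l => A (k - l) ^ 2 * B l := by
    simpa [Function.uncurry, mul_comm] using h.prod_symm.prod_factor k
  have hcol : Summable fun k => ∑' l, A (k - l) ^ 2 * B l := by
    simpa [Function.uncurry, mul_comm] using h.prod_symm.prod
  have htotal : ∑' k, ∑' l, A (k - l) ^ 2 * B l = (∑' m, A m ^ 2) * ∑' l, B l := by
    calc ∑' k, ∑' l, A (k - l) ^ 2 * B l = ∑' l, ∑' k, B l * A (k - l) ^ 2 := by
          simp only [mul_comm (A _ ^ 2)]; exact h.tsum_comm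
      _ = ∑' l, B l * ∑' m, A m ^ 2 := by
          refine tsum_congr fun l => ?_
          rw [tsum_mul_left]
          exact congrArg (B l * ·) ((Equiv.subRight l).tsum_eq fun m => A m ^ 2)
      _ = (∑' m, A m ^ 2) * ∑' l, B l := by rw [tsum_mul_right, mul_comm]
  have hpt (k : ℤ) := sq_tsum_conv_le hA0 hB0 hB k (hrow k)
  have hdom : Summable fun k => (∑' l, B l) * ∑' l, A (k - l) ^ 2 * B l := hcol.mul_left _
  have hsq : Summable fun k => (∑' l, A (k - l) * B l) ^ 2 :=
    hdom.of_nonneg_of_le (fun k => sq_nonneg _) fun k => (hpt k).2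
  refine ⟨fun k => (hpt k).1, hsq, ?_⟩
  calc ∑' k, (∑' l, A (k - l) * B l) ^ 2
      ≤ ∑' k, (∑' l, B l) * ∑' l, A (k - l) ^ 2 * B l :=
        Summable.tsum_le_tsum (fun k => (hpt k).2) hsq hdom
    _ = (∑' m, A m ^ 2) * (∑' l, B l) ^ 2 := by rw [tsum_mul_left, htotal]; ring

end Young

theorem japow_pos (k : ℤ) (s : ℝ) : 0 < japow k s := by unfold japow; positivity

theorem japow_nonneg (k : ℤ) (s : ℝ) : 0 ≤ japow k s := (japow_pos k s).le

theorem japow_zero (k : ℤ) : japow k 0 = 1 := by simp [japow]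

theorem japow_two (k : ℤ) : japow k 2 = 1 + (k : ℝ) ^ 2 := by simp [japow]

theorem japow_add (k : ℤ) (s t : ℝ) : japow k (s + t) = japow k s * japow k t := by
  rw [japow, japow, japow, ← Real.rpow_add (by positivity), add_div]

theorem japow_sq (k : ℤ) (s : ℝ) : japow k s ^ 2 = japow k (2 * s) := by
  rw [sq, ← japow_add, two_mul]

theorem japow_le_japow_of_le {s t : ℝ} (k : ℤ) (h : s ≤ t) : japow k s ≤ japow k t :=
  Real.rpow_le_rpow_of_exponent_le (by nlinarith [sq_nonneg (k : ℝ)]) (by linarith)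

theorem japow_le_japow_of_abs_le {k m : ℤ} {s : ℝ} (hs : 0 ≤ s) (h : |k| ≤ |m|) :
    japow k s ≤ japow m s := by
  have h' : (k : ℝ) ^ 2 ≤ (m : ℝ) ^ 2 := by
    rw [← sq_abs, ← sq_abs (m : ℝ)]
    exact pow_le_pow_left₀ (abs_nonneg _) (by exact_mod_cast h) 2
  exact Real.rpow_le_rpow (by positivity) (by linarith) (by positivity)

theorem abs_le_japow_one (k : ℤ) : |(k : ℝ)| ≤ japow k 1 := by
  rw [← sq_le_sq₀ (abs_nonneg _) (japow_nonneg _ _), japow_sq, sq_abs, mul_one, japow_two]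
  linarith

def weightedNorm (s : ℝ) (a : ℤ → ℂ) (m : ℤ) : ℝ := japow m s * ‖a m‖

theorem weightedNorm_nonneg (s : ℝ) (a : ℤ → ℂ) (m : ℤ) : 0 ≤ weightedNorm s a m :=
  mul_nonneg (japow_nonneg _ _) (norm_nonneg _)

theorem weightedNorm_sq (s : ℝ) (a : ℤ → ℂ) (m : ℤ) :
    weightedNorm s a m ^ 2 = japow m (2 * s) * ‖a m‖ ^ 2 := by
  rw [weightedNorm, mul_pow, japow_sq]

theorem memHs_iff_summable_weightedNorm_sq {s : ℝ} {a : ℤ → ℂ} :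
    MemHs s a ↔ Summable fun m => weightedNorm s a m ^ 2 := by
  simp only [MemHs, weightedNorm_sq]

theorem hsNorm_eq (s : ℝ) (a : ℤ → ℂ) :
    hsNorm s a = √(2 * π) * √(∑' m, weightedNorm s a m ^ 2) := by
  simp only [hsNorm, hsNormSq, weightedNorm_sq]
  exact Real.sqrt_mul (by positivity) _

theorem norm_derC (a : ℤ → ℂ) (m : ℤ) : ‖derC a m‖ = |(m : ℝ)| * ‖a m‖ := by
  simp [derC]

theorem norm_hilbC_le (a : ℤ → ℂ) (m : ℤ) : ‖hilbC a m‖ ≤ ‖a m‖ := by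
  rcases Int.sign_trichotomy m with h | h | h <;> simp [hilbC, h]

theorem norm_derC_le_of_le {a c : ℤ → ℂ} {s : ℝ} {m : ℤ}
    (h : ‖a m‖ ≤ japow m s * ‖c m‖) :
    ‖derC a m‖ ≤ japow m (s + 1) * ‖c m‖ := by
  rw [norm_derC, japow_add, mul_comm (japow m s), mul_assoc]
  exact mul_le_mul (abs_le_japow_one m) h (norm_nonneg _) (japow_nonneg _ _)

theorem weightedNorm_derC_le (s : ℝ) (a : ℤ → ℂ) (m : ℤ) :
    weightedNorm s (derC a) m ≤ weightedNorm (s + 1) a m := by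
  rw [weightedNorm, weightedNorm, norm_derC, japow_add, mul_assoc (japow m s)]
  exact mul_le_mul_of_nonneg_left
    (mul_le_mul_of_nonneg_right (abs_le_japow_one m) (norm_nonneg _)) (japow_nonneg _ _)

theorem MemHs.derC {s : ℝ} {a : ℤ → ℂ} (h : MemHs (s + 1) a) : MemHs s (derC a) := by
  rw [memHs_iff_summable_weightedNorm_sq] at h ⊢
  exact h.of_nonneg_of_le (fun m => sq_nonneg _) fun m =>
    pow_le_pow_left₀ (weightedNorm_nonneg _ _ _) (weightedNorm_derC_le s a m) 2

/-- The kernel `Λ̃(k - ℓ, ℓ)` of `Q`. -/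
def quadSymbol (k l : ℤ) : ℤ :=
  (Int.sign k - Int.sign l) * (-3 * |k - l| * (l * |l|) - Int.sign (k - l) * (l ^ 2 * |l|))

theorem abs_sign_le_one (x : ℤ) : |Int.sign x| ≤ 1 := by
  rcases Int.sign_trichotomy x with h | h | h <;> simp [h]

theorem abs_le_abs_sub_of_quadSymbol_ne_zero {k l : ℤ} (h : quadSymbol k l ≠ 0) :
    |k| ≤ |k - l| ∧ |l| ≤ |k - l| := by
  have hsign : Int.sign k ≠ Int.sign l := fun e => h (by simp [quadSymbol, e])
  have hl : l ≠ 0 := fun e => h (by simp [quadSymbol, e])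
  rcases hl.lt_or_gt with hl | hl
  · have hk : 0 ≤ k := by
      by_contra! hk
      simp [Int.sign_eq_neg_one_of_neg hk, Int.sign_eq_neg_one_of_neg hl] at hsign
    rw [abs_of_nonneg hk, abs_of_neg hl, abs_of_nonneg (by omega)]
    omega
  · have hk : k ≤ 0 := by
      by_contra! hk
      simp [Int.sign_eq_one_of_pos hk, Int.sign_eq_one_of_pos hl] at hsign
    rw [abs_of_nonpos hk, abs_of_pos hl, abs_of_nonpos (by omega)]
    omega

theorem abs_quadSymbol_le (k l : ℤ) : |quadSymbol k l| ≤ 8 * |k - l| * l ^ 2 := by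
  by_cases h : quadSymbol k l = 0
  · rw [h, abs_zero]; positivity
  have hl := (abs_le_abs_sub_of_quadSymbol_ne_zero h).2
  have hsign : |Int.sign k - Int.sign l| ≤ 2 :=
    (abs_sub _ _).trans (by linarith [abs_sign_le_one k, abs_sign_le_one l])
  have hinner : |-3 * |k - l| * (l * |l|) - Int.sign (k - l) * (l ^ 2 * |l|)| ≤
      4 * |k - l| * l ^ 2 := by
    have h1 : |-3 * |k - l| * (l * |l|)| = 3 * |k - l| * l ^ 2 := by
      simp only [abs_mul, abs_neg, abs_abs, ← sq]; norm_num
    have h2 : |Int.sign (k - l) * (l ^ 2 * |l|)| ≤ |k - l| * l ^ 2 := by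
      rw [abs_mul, abs_mul, abs_abs, abs_pow, sq_abs, mul_comm (l ^ 2)]
      calc |Int.sign (k - l)| * (|l| * l ^ 2) ≤ 1 * (|k - l| * l ^ 2) := by
            gcongr
            exact abs_sign_le_one _
        _ = |k - l| * l ^ 2 := one_mul _
    calc _ ≤ _ := abs_sub _ _
      _ ≤ 4 * |k - l| * l ^ 2 := by rw [h1]; linarith
  calc |quadSymbol k l| ≤ 2 * (4 * |k - l| * l ^ 2) := by
        rw [quadSymbol, abs_mul]; gcongr
    _ = 8 * |k - l| * l ^ 2 := by ring

theorem japow_mul_abs_quadSymbol_le {r : ℝ} (hr : 0 ≤ r) (k l : ℤ) :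
    japow k r * |(quadSymbol k l : ℝ)| ≤
      8 * (japow (k - l) r * |((k - l : ℤ) : ℝ)|) * (l : ℝ) ^ 2 := by
  have hΛ : |(quadSymbol k l : ℝ)| ≤ 8 * |((k - l : ℤ) : ℝ)| * (l : ℝ) ^ 2 := by
    exact_mod_cast abs_quadSymbol_le k l
  by_cases h : quadSymbol k l = 0
  · simp only [h, Int.cast_zero, abs_zero, mul_zero]
    have := japow_nonneg (k - l) r
    positivity
  have hk := japow_le_japow_of_abs_le hr (abs_le_abs_sub_of_quadSymbol_ne_zero h).1
  calc japow k r * |(quadSymbol k l : ℝ)|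
      ≤ japow (k - l) r * (8 * |((k - l : ℤ) : ℝ)| * (l : ℝ) ^ 2) :=
        mul_le_mul hk hΛ (abs_nonneg _) (japow_nonneg _ _)
    _ = _ := by ring

theorem derC_hilbC (a : ℤ → ℂ) (m : ℤ) : derC (hilbC a) m = (|m| : ℤ) * a m := by
  have h : ((|m| : ℤ) : ℂ) = m * m.sign := by
    rw [Int.abs_eq_natAbs, ← Int.mul_sign_self]; push_cast; rfl
  rw [derC, hilbC, h]
  linear_combination (-(m : ℂ) * m.sign * a m) * Complex.I_sq

theorem hasSum_commH {v f : ℤ → ℂ} {k : ℤ}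
    (h : Summable fun l => ‖v (k - l)‖ * ‖f l‖) :
    HasSum (fun l => -Complex.I * ((Int.sign k : ℂ) - Int.sign l) * (v (k - l) * f l))
      (commH v f k) := by
  have hvf : HasSum (fun l => v (k - l) * f l) (convC v f k) :=
    (Summable.of_norm_bounded h fun l => norm_mul_le _ _).hasSum
  have hvHf : HasSum (fun l => v (k - l) * hilbC f l) (convC v (hilbC f) k) := by
    refine (Summable.of_norm_bounded h fun l => ?_).hasSum
    exact (norm_mul_le _ _).trans
      (mul_le_mul_of_nonneg_left (norm_hilbC_le f l) (norm_nonneg _))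
  refine ((hvf.mul_left (-Complex.I * Int.sign k)).sub hvHf).congr_fun fun l => ?_
  simp only [hilbC]
  ring

theorem summable_norm_mul_comp_sub_of_le {a b c : ℤ → ℂ} {s t u : ℝ} (hc : MemHs u c)
    (hs : s ≤ u) (ht : t ≤ u) (ha : ∀ m, ‖a m‖ ≤ japow m s * ‖c m‖)
    (hb : ∀ m, ‖b m‖ ≤ japow m t * ‖c m‖) (k : ℤ) :
    Summable fun l => ‖a (k - l)‖ * ‖b l‖ := by
  have hw := memHs_iff_summable_weightedNorm_sq.mp hc
  refine (summable_mul_comp_sub (weightedNorm_nonneg u c) (weightedNorm_nonneg u c) hw hw k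
    ).of_nonneg_of_le (fun l => by positivity) fun l => ?_
  have hs' := mul_le_mul_of_nonneg_right (japow_le_japow_of_le (k - l) hs) (norm_nonneg (c (k - l)))
  have ht' := mul_le_mul_of_nonneg_right (japow_le_japow_of_le l ht) (norm_nonneg (c l))
  exact mul_le_mul ((ha _).trans hs') ((hb _).trans ht') (norm_nonneg _)
    (weightedNorm_nonneg _ _ _)

theorem hasSum_quadQ {c : ℤ → ℂ} (hc : MemHs 3 c) (k : ℤ) :
    HasSum (fun l => (quadSymbol k l : ℂ) * (c (k - l) * c l)) (quadQ c k) := by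
  have hH (m : ℤ) : ‖hilbC c m‖ ≤ japow m 0 * ‖c m‖ := by
    rw [japow_zero, one_mul]; exact norm_hilbC_le c m
  have h1 := hasSum_commH <| summable_norm_mul_comp_sub_of_le hc (by norm_num) (by norm_num)
    (fun m => norm_derC_le_of_le (hH m)) (fun m => norm_derC_le_of_le (norm_derC_le_of_le (hH m))) k
  have h2 := hasSum_commH <| summable_norm_mul_comp_sub_of_le hc (by norm_num) (by norm_num) hH
    (fun m => norm_derC_le_of_le (norm_derC_le_of_le (norm_derC_le_of_le (hH m)))) k
  refine ((h1.mul_left (-3)).sub h2).congr_fun fun l => ?_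
  have e2 : derC (derC (hilbC c)) l = Complex.I * l * ((|l| : ℤ) * c l) := by
    rw [derC, derC_hilbC]
  have e3 : derC (derC (derC (hilbC c))) l = -(l ^ 2 * (|l| : ℤ) * c l) := by
    rw [derC, e2]
    linear_combination ((l : ℂ) ^ 2 * (|l| : ℤ) * c l) * Complex.I_sq
  rw [e2, e3, derC_hilbC, quadSymbol, hilbC]
  push_cast
  linear_combination (-((k.sign : ℂ) - l.sign) *
    (3 * ((|k - l| : ℤ) : ℂ) * (l * (|l| : ℤ)) +
    (k - l).sign * (l ^ 2 * (|l| : ℤ))) * (c (k - l) * c l)) * Complex.I_sq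

theorem japow_mul_norm_quadQ_le {r : ℝ} (hr : 0 ≤ r) {c : ℤ → ℂ} (hc : MemHs 3 c) (k : ℤ)
    (h : Summable fun l => weightedNorm r (derC c) (k - l) * ‖derC (derC c) l‖) :
    japow k r * ‖quadQ c k‖ ≤
      8 * ∑' l, weightedNorm r (derC c) (k - l) * ‖derC (derC c) l‖ := by
  have hterm (l : ℤ) : ‖(japow k r : ℂ) * ((quadSymbol k l : ℂ) * (c (k - l) * c l))‖ ≤
      8 * (weightedNorm r (derC c) (k - l) * ‖derC (derC c) l‖) := by
    have hΛ := japow_mul_abs_quadSymbol_le hr k l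
    simp only [norm_mul, Complex.norm_real, Real.norm_eq_abs, abs_of_nonneg (japow_nonneg k r),
      Complex.norm_intCast, weightedNorm, norm_derC]
    calc japow k r * (|(quadSymbol k l : ℝ)| * (‖c (k - l)‖ * ‖c l‖))
        = japow k r * |(quadSymbol k l : ℝ)| * (‖c (k - l)‖ * ‖c l‖) := by ring
      _ ≤ 8 * (japow (k - l) r * |((k - l : ℤ) : ℝ)|) * (l : ℝ) ^ 2 *
          (‖c (k - l)‖ * ‖c l‖) := by
        gcongr
      _ = _ := by rw [← sq_abs (l : ℝ)]; push_cast; ring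
  have hsum := ((hasSum_quadQ hc k).mul_left (japow k r : ℂ)).norm_le_of_bounded
    (h.mul_left 8).hasSum hterm
  rwa [norm_mul, Complex.norm_real, Real.norm_eq_abs, abs_of_nonneg (japow_nonneg k r),
    tsum_mul_left] at hsum

/-- `Σ_l |l| |a^(l)|` is the Wiener-algebra norm of `∂ₓ a`; this constant bounds it by
`‖a‖_{H²}`. -/
def wienerConst : ℝ := √(∑' l : ℤ, (|(l : ℝ)| / japow l 2) ^ 2)

theorem summable_abs_div_japow_two_sq : Summable fun l : ℤ => (|(l : ℝ)| / japow l 2) ^ 2 := by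
  refine (Real.summable_one_div_int_pow.mpr one_lt_two).of_nonneg_of_le (fun l => sq_nonneg _)
    fun l => ?_
  rw [div_pow, sq_abs, japow_two]
  rcases eq_or_ne (l : ℝ) 0 with h | h
  · simp [h]
  · rw [div_le_div_iff₀ (by positivity) (by positivity)]
    nlinarith [sq_nonneg (l : ℝ), pow_pos (sq_pos_of_ne_zero h) 2]

theorem wienerConst_pos : 0 < wienerConst := by
  refine Real.sqrt_pos.mpr (summable_abs_div_japow_two_sq.tsum_pos (fun l => sq_nonneg _) 1 ?_)
  rw [japow_two]; norm_num

theorem summable_and_tsum_norm_derC_le {a : ℤ → ℂ} (ha : MemHs 2 a) :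
    (Summable fun l => ‖derC a l‖) ∧
      ∑' l, ‖derC a l‖ ≤ wienerConst * √(∑' l, weightedNorm 2 a l ^ 2) := by
  have hsplit (l : ℤ) : ‖derC a l‖ = |(l : ℝ)| / japow l 2 * weightedNorm 2 a l := by
    rw [norm_derC, weightedNorm]
    field_simp [(japow_pos l 2).ne']
  simpa only [← hsplit, wienerConst] using summable_and_tsum_mul_le_sqrt_mul_sqrt
    (fun l => div_nonneg (abs_nonneg _) (japow_nonneg _ _)) (weightedNorm_nonneg 2 a)
    summable_abs_div_japow_two_sq (memHs_iff_summable_weightedNorm_sq.mp ha)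

theorem sqrt_tsum_weightedNorm_quadQ_sq_le {r : ℝ} (hr : 0 ≤ r) {c : ℤ → ℂ}
    (hc3 : MemHs 3 c) (hcr : MemHs (r + 1) c) :
    √(∑' k, weightedNorm r (quadQ c) k ^ 2) ≤ 8 * wienerConst *
      √(∑' l, weightedNorm 2 (derC c) l ^ 2) * √(∑' m, weightedNorm r (derC c) m ^ 2) := by
  set A := weightedNorm r (derC c)
  set B : ℤ → ℝ := fun l => ‖derC (derC c) l‖
  have hA2 : Summable fun m => A m ^ 2 := memHs_iff_summable_weightedNorm_sq.mp hcr.derC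
  obtain ⟨hB, hBle⟩ := summable_and_tsum_norm_derC_le (a := derC c)
    (MemHs.derC (by norm_num [hc3]))
  obtain ⟨hconv, hconv2, hyoung⟩ :=
    summable_and_tsum_sq_conv_le (weightedNorm_nonneg r _) (fun l => norm_nonneg _) hA2 hB
  have hpt (k : ℤ) : weightedNorm r (quadQ c) k ^ 2 ≤ 64 * (∑' l, A (k - l) * B l) ^ 2 := by
    calc weightedNorm r (quadQ c) k ^ 2 ≤ (8 * ∑' l, A (k - l) * B l) ^ 2 :=
          pow_le_pow_left₀ (weightedNorm_nonneg _ _ _)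
            (japow_mul_norm_quadQ_le hr hc3 k (hconv k)) 2
      _ = 64 * (∑' l, A (k - l) * B l) ^ 2 := by ring
  have hSA : 0 ≤ ∑' m, A m ^ 2 := tsum_nonneg fun m => sq_nonneg _
  have hQ : ∑' k, weightedNorm r (quadQ c) k ^ 2 ≤
      (8 * (∑' l, B l) * √(∑' m, A m ^ 2)) ^ 2 := by
    calc ∑' k, weightedNorm r (quadQ c) k ^ 2 ≤ ∑' k, 64 * (∑' l, A (k - l) * B l) ^ 2 :=
          Summable.tsum_le_tsum hpt
            ((hconv2.mul_left 64).of_nonneg_of_le (fun k => sq_nonneg _) hpt) (hconv2.mul_left 64)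
      _ ≤ 64 * ((∑' m, A m ^ 2) * (∑' l, B l) ^ 2) := by
          rw [tsum_mul_left]; exact mul_le_mul_of_nonneg_left hyoung (by norm_num)
      _ = (8 * (∑' l, B l) * √(∑' m, A m ^ 2)) ^ 2 := by rw [mul_pow, Real.sq_sqrt hSA]; ring
  calc √(∑' k, weightedNorm r (quadQ c) k ^ 2) ≤ 8 * (∑' l, B l) * √(∑' m, A m ^ 2) :=
        (Real.sqrt_le_sqrt hQ).trans_eq (Real.sqrt_sq (by positivity))
    _ ≤ 8 * (wienerConst * √(∑' l, weightedNorm 2 (derC c) l ^ 2)) *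
          √(∑' m, A m ^ 2) := by
        gcongr
    _ = _ := by ring

/-- There is a constant `C > 0` (independent of `r`) such that for every
real `r ≥ 0` and every `φ ∈ H³ ∩ H^(r+1)` with zero spatial mean,
`‖Q[φ]‖_{H^r} ≤ C * ‖φₓ‖_{H²} * ‖φₓ‖_{H^r}`. -/
theorem stmt_15 :
    ∃ C > (0 : ℝ), ∀ (r : ℝ), 0 ≤ r → ∀ c : ℤ → ℂ,
      c 0 = 0 → MemHs 3 c → MemHs (r + 1) c →
      hsNorm r (quadQ c) ≤ C * hsNorm 2 (derC c) * hsNorm r (derC c) := by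
  refine ⟨8 * wienerConst / √(2 * π), by have := wienerConst_pos; positivity, ?_⟩
  intro r hr c _ hc3 hcr
  rw [hsNorm_eq, hsNorm_eq, hsNorm_eq]
  calc √(2 * π) * √(∑' k, weightedNorm r (quadQ c) k ^ 2)
      ≤ √(2 * π) * (8 * wienerConst * √(∑' l, weightedNorm 2 (derC c) l ^ 2) *
          √(∑' m, weightedNorm r (derC c) m ^ 2)) := by
        gcongr; exact sqrt_tsum_weightedNorm_quadQ_sq_le hr hc3 hcr
    _ = _ := by field_simp
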